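/- Assume that for every x ∈ X and u ∈ U, sup_{w ∈ W} l(x, u, w) ≥ 0, and that for every y ∈ Y the preimage h^{-1}{y} is a finite indexed set of at most M elements. Suppose the value-iteration sequence is bounded with limit V_⋆, and suppose that for every r and y the infimum over u ∈ U in the Bellman operator applied to V_⋆ is attained. Let η_⋆(r, y) be a minimizing argument, so that B_{η_⋆(r,y)} V_⋆(r, y) = V_⋆(r, y). Then the information-state feedback policy μ_t(y_{0:t}, u_{0:t-1}) = η_⋆(r_t, y_t), where r_0 = 0 and r_{t+1} = g(r_t, y_{t+1}, y_t, u_t), achieves sup_N J_π^N(y_0) = J_⋆(y_0) for every y_0 ∈ Y, i.e., it is optimal for the minimax problem. -/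

import Mathlib

open scoped BigOperators

noncomputable section

variable {X U W Y : Type*}

/-- The worst-case history `ρ_t(x, y_{0:t-1}, u_{0:t-1})`: the supremum (in `ℝ ∪ {-∞}`,
with `sSup ∅ = ⊥`) of accumulated stage costs over all disturbance sequences and initial
states whose trajectory reaches `x` at time `t` and is consistent with the measurements. -/
noncomputable def rho (f : X → U → W → X) (h : X → Y) (l : X → U → W → ℝ)
    (t : ℕ) (x : X) (ys : ℕ → Y) (us : ℕ → U) : EReal :=
  sSup { c : EReal | ∃ (xs : ℕ → X) (ws : ℕ → W),
    xs t = x ∧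
    (∀ τ < t, xs (τ + 1) = f (xs τ) (us τ) (ws τ)) ∧
    (∀ τ < t, h (xs τ) = ys τ) ∧
    c = ((∑ τ ∈ Finset.range t, l (xs τ) (us τ) (ws τ) : ℝ) : EReal) }

/-- Inputs generated causally by a strategy `π` from a measurement sequence:
`u_t = μ_t(y_{0:t}, u_{0:t-1})`. -/
noncomputable def inputsOf (π : ℕ → List Y → List U → U) (ys : ℕ → Y) : ℕ → U
  | t => π t ((List.range (t + 1)).map ys) (List.ofFn fun i : Fin t => inputsOf π ys i)
  decreasing_by exact i.isLt

/-- Closed loop: state, list of past measurements and list of past inputs. -/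
noncomputable def loop (f : X → U → W → X) (h : X → Y)
    (π : ℕ → List Y → List U → U) (x0 : X) (ws : ℕ → W) : ℕ → X × List Y × List U
  | 0 => (x0, [h x0], [])
  | t + 1 =>
    let p := loop f h π x0 ws t
    let u := π t p.2.1 p.2.2
    let x' := f p.1 u (ws t)
    (x', p.2.1 ++ [h x'], p.2.2 ++ [u])

/-- Closed-loop state `x_t`. -/
noncomputable def cstate (f : X → U → W → X) (h : X → Y)
    (π : ℕ → List Y → List U → U) (x0 : X) (ws : ℕ → W) (t : ℕ) : X :=
  (loop f h π x0 ws t).1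

/-- Closed-loop input `u_t = μ_t(y_{0:t}, u_{0:t-1})`. -/
noncomputable def cinput (f : X → U → W → X) (h : X → Y)
    (π : ℕ → List Y → List U → U) (x0 : X) (ws : ℕ → W) (t : ℕ) : U :=
  π t (loop f h π x0 ws t).2.1 (loop f h π x0 ws t).2.2

/-- The worst-case `N`-horizon performance `J_π^N(y_0)`. -/
noncomputable def Jcost (f : X → U → W → X) (h : X → Y) (l : X → U → W → ℝ)
    (π : ℕ → List Y → List U → U) (N : ℕ) (y0 : Y) : EReal :=
  sSup { c : EReal | ∃ (x0 : X) (ws : ℕ → W), h x0 = y0 ∧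
    c = ((∑ t ∈ Finset.range (N + 1),
      l (cstate f h π x0 ws t) (cinput f h π x0 ws t) (ws t) : ℝ) : EReal) }

/-- The information-state update `g` (componentwise), for preimages of `h`
enumerated by `ξ : Y → Fin M → X`. -/
noncomputable def gup {M : ℕ} (f : X → U → W → X) (l : X → U → W → ℝ)
    (ξ : Y → Fin M → X) (r : Fin M → EReal) (ynext y : Y) (u : U) : Fin M → EReal :=
  fun i => sSup { c : EReal | ∃ (j : Fin M) (w : W),
    ξ ynext i = f (ξ y j) u w ∧ c = (l (ξ y j) u w : EReal) + r j }

/-- The information state `r_t`, defined recursively by `r_0 = 0` and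
`r_t = g(r_{t-1}, y_t, y_{t-1}, u_{t-1})`. -/
noncomputable def rvec {M : ℕ} (f : X → U → W → X) (l : X → U → W → ℝ)
    (ξ : Y → Fin M → X) (ys : ℕ → Y) (us : ℕ → U) : ℕ → Fin M → EReal
  | 0 => 0
  | t + 1 => gup f l ξ (rvec f l ξ ys us t) (ys (t + 1)) (ys t) (us t)

/-- The Bellman operator `B_u V(r, y) = sup_{v ∈ Y} V(g(r, v, y, u), v)`. -/
noncomputable def Bu {M : ℕ} (f : X → U → W → X) (l : X → U → W → ℝ)
    (ξ : Y → Fin M → X) (V : (Fin M → EReal) → Y → EReal) (u : U)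
    (r : Fin M → EReal) (y : Y) : EReal :=
  ⨆ v : Y, V (gup f l ξ r v y u) v

/-- The Bellman operator `B V(r, y) = inf_{u ∈ U} B_u V(r, y)`. -/
noncomputable def Bop {M : ℕ} (f : X → U → W → X) (l : X → U → W → ℝ)
    (ξ : Y → Fin M → X) (V : (Fin M → EReal) → Y → EReal)
    (r : Fin M → EReal) (y : Y) : EReal :=
  ⨅ u : U, Bu f l ξ V u r y

/-- The value iteration `V_0(r, y) = max_i r^i`, `V_{k+1} = B V_k`. -/
noncomputable def Vseq {M : ℕ} (f : X → U → W → X) (l : X → U → W → ℝ)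
    (ξ : Y → Fin M → X) : ℕ → (Fin M → EReal) → Y → EReal
  | 0 => fun r _ => ⨆ i, r i
  | k + 1 => fun r y => Bop f l ξ (Vseq f l ξ k) r y

/-- The (possibly time-varying) information-state feedback policy
`μ_t(y_{0:t}, u_{0:t-1}) = η_t(r_t, y_t)`, where `r_0 = 0` and
`r_{t+1} = g(r_t, y_{t+1}, y_t, u_t)`. -/
noncomputable def infoStrategyT {M : ℕ} [Nonempty Y] [Nonempty U]
    (f : X → U → W → X) (l : X → U → W → ℝ) (ξ : Y → Fin M → X)
    (η : ℕ → (Fin M → EReal) → Y → U) : ℕ → List Y → List U → U :=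
  fun t ysl usl =>
    η t (rvec f l ξ (fun τ => ysl.getD τ (Classical.arbitrary Y))
          (fun τ => usl.getD τ (Classical.arbitrary U)) (ysl.length - 1))
      (ysl.getD (ysl.length - 1) (Classical.arbitrary Y))

/-- Stationary information-state feedback policy `μ_t(y_{0:t}, u_{0:t-1}) = η(r_t, y_t)`. -/
noncomputable def infoStrategy {M : ℕ} [Nonempty Y] [Nonempty U]
    (f : X → U → W → X) (l : X → U → W → ℝ) (ξ : Y → Fin M → X)
    (η : (Fin M → EReal) → Y → U) : ℕ → List Y → List U → U :=
  infoStrategyT f l ξ (fun _ => η)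

end

/-!
Write `V⋆ = ⨆ k, V_k`. The information state `r_t` of a closed loop records, for every state in
the current fibre of `h`, the worst cost of a history consistent with the data that reaches it.
For an arbitrary strategy `π`, induction on `k` gives `V_k(r_t, y_t) ≤ sup_N J_π^N(y_0)` along
all closed loops of `π`: the input chosen by `π` is a candidate in the infimum defining `B`, and
by causality every successor information state that is not identically `-∞` is that of another
closed loop of `π`. Hence `V⋆(0, y_0) ≤ J⋆(y_0)`. Under the feedback `η⋆` the Bellman equation
makes `V⋆(r_t, y_t)` non-increasing along the loop, and the cost accumulated up to time `N` is at
most `max_i r_{N+1}^i = V_0(r_{N+1}, y_{N+1}) ≤ V⋆(0, y_0)`.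
-/

open Finset

noncomputable section

variable {X U W Y : Type*}

section Enumeration

variable {M : ℕ} {h : X → Y} {ξ : Y → Fin M → X}

lemma apply_enum_eq (hξ : ∀ y : Y, Set.range (ξ y) = {x : X | h x = y}) (y : Y) (i : Fin M) :
    h (ξ y i) = y := by
  simpa [hξ y] using Set.mem_range_self (f := ξ y) i

lemma exists_enum_eq (hξ : ∀ y : Y, Set.range (ξ y) = {x : X | h x = y}) {x : X} {y : Y}
    (hx : h x = y) : ∃ i, ξ y i = x := by
  rwa [← Set.mem_range, hξ y]

end Enumeration

section History

variable (f : X → U → W → X) (h : X → Y) (l : X → U → W → ℝ)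

def IsHistory (ys : ℕ → Y) (us : ℕ → U) (t : ℕ) (xs : ℕ → X) (ws : ℕ → W) : Prop :=
  (∀ τ < t, xs (τ + 1) = f (xs τ) (us τ) (ws τ)) ∧ ∀ τ < t, h (xs τ) = ys τ

variable {f h} {ys : ℕ → Y} {us : ℕ → U} {t : ℕ} {xs : ℕ → X} {ws : ℕ → W}

lemma IsHistory.mono (hH : IsHistory f h ys us t xs ws) {s : ℕ} (hst : s ≤ t) :
    IsHistory f h ys us s xs ws :=
  ⟨fun τ hτ => hH.1 τ (hτ.trans_le hst), fun τ hτ => hH.2 τ (hτ.trans_le hst)⟩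

lemma IsHistory.exists_succ (hH : IsHistory f h ys us t xs ws) (hx : h (xs t) = ys t) (w : W) :
    ∃ xs' ws', IsHistory f h ys us (t + 1) xs' ws' ∧ xs' (t + 1) = f (xs t) (us t) w ∧
      ∑ τ ∈ range (t + 1), l (xs' τ) (us τ) (ws' τ)
        = ∑ τ ∈ range t, l (xs τ) (us τ) (ws τ) + l (xs t) (us t) w := by
  have hxs : ∀ τ ≤ t, Function.update xs (t + 1) (f (xs t) (us t) w) τ = xs τ :=
    fun τ hτ => Function.update_of_ne (by omega) _ _
  have hws : ∀ τ < t, Function.update ws t w τ = ws τ :=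
    fun τ hτ => Function.update_of_ne hτ.ne _ _
  refine ⟨Function.update xs (t + 1) (f (xs t) (us t) w), Function.update ws t w,
    ⟨fun τ hτ => ?_, fun τ hτ => ?_⟩, Function.update_self .., ?_⟩
  · rcases Nat.lt_succ_iff_lt_or_eq.1 hτ with hτ | rfl
    · rw [hxs _ hτ, hxs _ hτ.le, hws _ hτ, hH.1 τ hτ]
    · rw [Function.update_self, Function.update_self, hxs _ le_rfl]
  · rw [hxs _ (Nat.lt_succ_iff.1 hτ)]
    rcases Nat.lt_succ_iff_lt_or_eq.1 hτ with hτ | rfl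
    exacts [hH.2 τ hτ, hx]
  · rw [sum_range_succ, hxs _ le_rfl, Function.update_self]
    exact congrArg (· + _) <| sum_congr rfl fun τ hτ => by
      rw [hxs _ (mem_range.1 hτ).le, hws _ (mem_range.1 hτ)]

lemma le_rho (hH : IsHistory f h ys us t xs ws) :
    ((∑ τ ∈ range t, l (xs τ) (us τ) (ws τ) : ℝ) : EReal) ≤ rho f h l t (xs t) ys us :=
  le_sSup ⟨xs, ws, rfl, hH.1, hH.2, rfl⟩

lemma rho_le_iff {x : X} {c : EReal} :
    rho f h l t x ys us ≤ c ↔ ∀ xs ws, IsHistory f h ys us t xs ws → xs t = x →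
      ((∑ τ ∈ range t, l (xs τ) (us τ) (ws τ) : ℝ) : EReal) ≤ c := by
  refine ⟨fun hc xs ws hH hx => by subst hx; exact (le_rho l hH).trans hc, fun H => sSup_le ?_⟩
  rintro _ ⟨xs, ws, hx, hdyn, hmeas, rfl⟩
  exact H xs ws ⟨hdyn, hmeas⟩ hx

lemma exists_isHistory_of_rho_ne_bot {x : X} (hρ : rho f h l t x ys us ≠ ⊥) :
    ∃ xs ws, IsHistory f h ys us t xs ws ∧ xs t = x := by
  by_contra! H
  exact hρ (le_bot_iff.1 ((rho_le_iff l).2 fun xs ws hH hx => absurd hx (H xs ws hH)))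

end History

section InformationState

variable {M : ℕ} (f : X → U → W → X) (l : X → U → W → ℝ) (ξ : Y → Fin M → X)

lemma rvec_congr {ys ys' : ℕ → Y} {us us' : ℕ → U} {t : ℕ}
    (hy : ∀ τ ≤ t, ys τ = ys' τ) (hu : ∀ τ < t, us τ = us' τ) :
    rvec f l ξ ys us t = rvec f l ξ ys' us' t := by
  induction t with
  | zero => rfl
  | succ t ih =>
    simp only [rvec]
    rw [ih (fun τ hτ => hy τ (by omega)) (fun τ hτ => hu τ (by omega)),
      hy (t + 1) le_rfl, hy t (by omega), hu t (by omega)]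

theorem rvec_eq_rho [Nonempty W] {h : X → Y}
    (hξ : ∀ y : Y, Set.range (ξ y) = {x : X | h x = y}) (ys : ℕ → Y) (us : ℕ → U) (t : ℕ)
    (i : Fin M) : rvec f l ξ ys us t i = rho f h l t (ξ (ys t) i) ys us := by
  induction t generalizing i with
  | zero =>
    refine le_antisymm ?_ ((rho_le_iff l).2 fun _ _ _ _ => by simp [rvec])
    simpa [rvec] using le_rho (xs := fun _ => ξ (ys 0) i) (ws := fun _ => Classical.arbitrary W) l
      (t := 0) ⟨nofun, nofun⟩
  | succ t ih =>
    apply le_antisymm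
    · refine sSup_le ?_
      rintro _ ⟨j, w, hfw, rfl⟩
      rw [add_comm, ← EReal.le_sub_iff_add_le (Or.inl (EReal.coe_ne_bot _))
        (Or.inl (EReal.coe_ne_top _)), ih, rho_le_iff]
      intro xs ws hH hx
      rw [EReal.le_sub_iff_add_le (Or.inl (EReal.coe_ne_bot _)) (Or.inl (EReal.coe_ne_top _))]
      obtain ⟨xs', ws', hH', hx', hsum⟩ :=
        hH.exists_succ l (hx ▸ apply_enum_eq hξ _ _) w
      rw [hx, ← hfw] at hx'
      simpa [hsum, hx', hx] using le_rho l hH'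
    · refine (rho_le_iff l).2 fun xs ws hH hx => ?_
      obtain ⟨j, hj⟩ := exists_enum_eq hξ (hH.2 t t.lt_succ_self)
      have hprev :
          ((∑ τ ∈ range t, l (xs τ) (us τ) (ws τ) : ℝ) : EReal) ≤ rvec f l ξ ys us t j := by
        rw [ih, hj]
        exact le_rho l (hH.mono t.le_succ)
      refine le_sSup_of_le ⟨j, ws t, by rw [hj, ← hH.1 t t.lt_succ_self, hx], rfl⟩ ?_
      rw [sum_range_succ, EReal.coe_add, add_comm, hj]
      gcongr

end InformationState

section ClosedLoop

variable (f : X → U → W → X) (h : X → Y) (π : ℕ → List Y → List U → U)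

def cmeas (x0 : X) (ws : ℕ → W) (t : ℕ) : Y := h (cstate f h π x0 ws t)

lemma cstate_succ (x0 : X) (ws : ℕ → W) (t : ℕ) :
    cstate f h π x0 ws (t + 1) = f (cstate f h π x0 ws t) (cinput f h π x0 ws t) (ws t) :=
  rfl

lemma isHistory_cstate (x0 : X) (ws : ℕ → W) (t : ℕ) :
    IsHistory f h (cmeas f h π x0 ws) (cinput f h π x0 ws) t (cstate f h π x0 ws) ws :=
  ⟨fun _ _ => rfl, fun _ _ => rfl⟩

lemma loop_lists (x0 : X) (ws : ℕ → W) (t : ℕ) :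
    (loop f h π x0 ws t).2.1 = (List.range (t + 1)).map (cmeas f h π x0 ws) ∧
      (loop f h π x0 ws t).2.2 = (List.range t).map (cinput f h π x0 ws) := by
  induction t with
  | zero => exact ⟨rfl, rfl⟩
  | succ t ih =>
    constructor
    · show (loop f h π x0 ws t).2.1 ++ [cmeas f h π x0 ws (t + 1)] = _
      rw [ih.1, List.range_succ (n := t + 1), List.map_append]
      rfl
    · show (loop f h π x0 ws t).2.2 ++ [cinput f h π x0 ws t] = _
      rw [ih.2, List.range_succ (n := t), List.map_append]
      rfl

lemma cinput_eq (x0 : X) (ws : ℕ → W) (t : ℕ) :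
    cinput f h π x0 ws t = π t ((List.range (t + 1)).map (cmeas f h π x0 ws))
      ((List.range t).map (cinput f h π x0 ws)) := by
  rw [cinput, (loop_lists f h π x0 ws t).1, (loop_lists f h π x0 ws t).2]

lemma cinput_congr {x0 x0' : X} {ws ws' : ℕ → W} {t : ℕ}
    (hy : ∀ τ ≤ t, cmeas f h π x0 ws τ = cmeas f h π x0' ws' τ)
    (hu : ∀ τ < t, cinput f h π x0 ws τ = cinput f h π x0' ws' τ) :
    cinput f h π x0 ws t = cinput f h π x0' ws' t := by
  rw [cinput_eq, cinput_eq,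
    List.map_congr_left fun τ hτ => hy τ (Nat.lt_succ_iff.1 (List.mem_range.1 hτ)),
    List.map_congr_left fun τ hτ => hu τ (List.mem_range.1 hτ)]

/-- Causality: the strategy only sees measurements and past inputs, which the history reproduces. -/
lemma IsHistory.cstate_eq {x0 : X} {ws : ℕ → W} {T : ℕ} {xs : ℕ → X} {ws' : ℕ → W}
    (hH : IsHistory f h (cmeas f h π x0 ws) (cinput f h π x0 ws) T xs ws') :
    (∀ τ ≤ T, cstate f h π (xs 0) ws' τ = xs τ) ∧
      ∀ τ < T, cinput f h π (xs 0) ws' τ = cinput f h π x0 ws τ := by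
  induction T with
  | zero => exact ⟨fun τ hτ => by rw [Nat.le_zero.1 hτ]; rfl, nofun⟩
  | succ T ih =>
    obtain ⟨hx, hu⟩ := ih (hH.mono T.le_succ)
    have huT : cinput f h π (xs 0) ws' T = cinput f h π x0 ws T :=
      cinput_congr f h π (fun τ hτ => by
        rw [cmeas, hx τ hτ, hH.2 τ (Nat.lt_succ_of_le hτ)]) hu
    refine ⟨fun τ hτ => ?_, fun τ hτ => ?_⟩
    · rcases Nat.le_succ_iff.1 hτ with hτ | rfl
      · exact hx τ hτ
      · rw [cstate_succ, hx T le_rfl, huT, hH.1 T T.lt_succ_self]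
    · rcases Nat.lt_succ_iff_lt_or_eq.1 hτ with hτ | rfl
      exacts [hu τ hτ, huT]

end ClosedLoop

section ValueFunction

variable {M : ℕ} (f : X → U → W → X) (l : X → U → W → ℝ) (ξ : Y → Fin M → X)

def Vstar (r : Fin M → EReal) (y : Y) : EReal := ⨆ k, Vseq f l ξ k r y

lemma iSup_le_Vstar (r : Fin M → EReal) (y : Y) : ⨆ i, r i ≤ Vstar f l ξ r y :=
  le_iSup (fun k => Vseq f l ξ k r y) 0

lemma gup_bot (v y : Y) (u : U) : gup f l ξ ⊥ v y u = ⊥ :=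
  funext fun _ => sSup_eq_bot.2 <| by
    rintro _ ⟨j, w, -, rfl⟩
    exact EReal.add_bot _

lemma Vseq_bot [Nonempty U] (k : ℕ) (y : Y) : Vseq f l ξ k ⊥ y = ⊥ := by
  induction k generalizing y with
  | zero => simp [Vseq]
  | succ k ih => simp [Vseq, Bop, Bu, gup_bot, ih]

lemma Vstar_gup_le {η : (Fin M → EReal) → Y → U}
    (hη : ∀ r : Fin M → EReal, (∀ i, r i ≠ ⊤) → ∀ y : Y,
      Bu f l ξ (Vstar f l ξ) (η r y) r y = Vstar f l ξ r y)
    (r : Fin M → EReal) (v y : Y) : Vstar f l ξ (gup f l ξ r v y (η r y)) v ≤ Vstar f l ξ r y := by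
  by_cases hr : ∀ i, r i ≠ ⊤
  · rw [← hη r hr y]
    exact le_iSup (fun v => Vstar f l ξ (gup f l ξ r v y (η r y)) v) v
  · obtain ⟨i, hi⟩ := not_forall_not.1 hr
    have htop : Vstar f l ξ r y = ⊤ :=
      top_unique (hi ▸ (le_iSup r i).trans (iSup_le_Vstar f l ξ r y))
    exact htop ▸ le_top

end ValueFunction

section Optimality

variable {M : ℕ} (f : X → U → W → X) (h : X → Y) (l : X → U → W → ℝ) (ξ : Y → Fin M → X)

def cinfo (π : ℕ → List Y → List U → U) (x0 : X) (ws : ℕ → W) (t : ℕ) : Fin M → EReal :=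
  rvec f l ξ (cmeas f h π x0 ws) (cinput f h π x0 ws) t

lemma cinput_infoStrategy [Nonempty Y] [Nonempty U] (η : (Fin M → EReal) → Y → U) (x0 : X)
    (ws : ℕ → W) (t : ℕ) :
    cinput f h (infoStrategy f l ξ η) x0 ws t
      = η (cinfo f h l ξ (infoStrategy f l ξ η) x0 ws t)
          (cmeas f h (infoStrategy f l ξ η) x0 ws t) := by
  rw [cinput_eq]
  simp only [infoStrategy, infoStrategyT, List.length_map, List.length_range, Nat.add_sub_cancel]
  congr 1
  · refine rvec_congr f l ξ (fun τ hτ => ?_) (fun τ hτ => ?_)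
    · simp [List.getD_eq_getElem?_getD, Nat.lt_succ_of_le hτ]
    · simp [List.getD_eq_getElem?_getD, hτ]
  · simp [List.getD_eq_getElem?_getD]

lemma Vstar_cinfo_le [Nonempty Y] [Nonempty U] {η : (Fin M → EReal) → Y → U}
    (hη : ∀ r : Fin M → EReal, (∀ i, r i ≠ ⊤) → ∀ y : Y,
      Bu f l ξ (Vstar f l ξ) (η r y) r y = Vstar f l ξ r y)
    (x0 : X) (ws : ℕ → W) (t : ℕ) :
    Vstar f l ξ (cinfo f h l ξ (infoStrategy f l ξ η) x0 ws t)
        (cmeas f h (infoStrategy f l ξ η) x0 ws t) ≤ Vstar f l ξ 0 (h x0) := by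
  induction t with
  | zero => exact le_rfl
  | succ t ih =>
    have hstep := Vstar_gup_le f l ξ hη (cinfo f h l ξ (infoStrategy f l ξ η) x0 ws t)
      (cmeas f h (infoStrategy f l ξ η) x0 ws (t + 1)) (cmeas f h (infoStrategy f l ξ η) x0 ws t)
    rw [← cinput_infoStrategy f h l ξ η x0 ws t] at hstep
    exact hstep.trans ih

lemma iSup_Jcost_infoStrategy_le [Nonempty W] [Nonempty Y] [Nonempty U]
    (hξ : ∀ y : Y, Set.range (ξ y) = {x : X | h x = y}) {η : (Fin M → EReal) → Y → U}
    (hη : ∀ r : Fin M → EReal, (∀ i, r i ≠ ⊤) → ∀ y : Y,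
      Bu f l ξ (Vstar f l ξ) (η r y) r y = Vstar f l ξ r y) (y0 : Y) :
    ⨆ N, Jcost f h l (infoStrategy f l ξ η) N y0 ≤ Vstar f l ξ 0 y0 := by
  refine iSup_le fun N => sSup_le ?_
  rintro _ ⟨x0, ws, rfl, rfl⟩
  set π := infoStrategy f l ξ η
  obtain ⟨i, hi⟩ := exists_enum_eq hξ (y := cmeas f h π x0 ws (N + 1)) rfl
  calc _ ≤ rho f h l (N + 1) (cstate f h π x0 ws (N + 1)) (cmeas f h π x0 ws)
          (cinput f h π x0 ws) :=
        le_rho l (isHistory_cstate f h π x0 ws (N + 1))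
    _ = cinfo f h l ξ π x0 ws (N + 1) i := by rw [cinfo, rvec_eq_rho f l ξ hξ, hi]
    _ ≤ Vstar f l ξ (cinfo f h l ξ π x0 ws (N + 1)) (cmeas f h π x0 ws (N + 1)) :=
        (le_iSup _ i).trans (iSup_le_Vstar f l ξ _ _)
    _ ≤ Vstar f l ξ 0 (h x0) := Vstar_cinfo_le f h l ξ hη x0 ws (N + 1)

lemma zero_le_Jcost_zero (pos : ∀ (x : X) (u : U), (0 : EReal) ≤ ⨆ w : W, (l x u w : EReal))
    (π : ℕ → List Y → List U → U) (x0 : X) : 0 ≤ Jcost f h l π 0 (h x0) :=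
  (pos x0 (π 0 [h x0] [])).trans <| iSup_le fun w =>
    le_sSup ⟨x0, fun _ => w, rfl, by simp [cstate, cinput, loop]⟩

lemma le_Jcost_of_isHistory {π : ℕ → List Y → List U → U} {x0 : X} {ws : ℕ → W} {N : ℕ}
    {xs : ℕ → X} {ws' : ℕ → W}
    (hH : IsHistory f h (cmeas f h π x0 ws) (cinput f h π x0 ws) (N + 1) xs ws') :
    ((∑ τ ∈ range (N + 1), l (xs τ) (cinput f h π x0 ws τ) (ws' τ) : ℝ) : EReal)
      ≤ Jcost f h l π N (h x0) := by
  obtain ⟨hx, hu⟩ := hH.cstate_eq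
  refine le_sSup ⟨xs 0, ws', hH.2 0 N.succ_pos, ?_⟩
  congr 1
  exact sum_congr rfl fun τ hτ => by
    rw [hx τ (mem_range.1 hτ).le, hu τ (mem_range.1 hτ)]

lemma iSup_cinfo_le [Nonempty W] (pos : ∀ (x : X) (u : U), (0 : EReal) ≤ ⨆ w : W, (l x u w : EReal))
    (hξ : ∀ y : Y, Set.range (ξ y) = {x : X | h x = y}) (π : ℕ → List Y → List U → U) (x0 : X)
    (ws : ℕ → W) (t : ℕ) : ⨆ i, cinfo f h l ξ π x0 ws t i ≤ ⨆ N, Jcost f h l π N (h x0) := by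
  refine iSup_le fun i => ?_
  rw [cinfo, rvec_eq_rho f l ξ hξ, rho_le_iff]
  intro xs ws' hH _
  cases t with
  | zero =>
    simpa using (zero_le_Jcost_zero f h l pos π x0).trans (le_iSup (Jcost f h l π · (h x0)) 0)
  | succ N => exact (le_Jcost_of_isHistory f h l hH).trans (le_iSup (Jcost f h l π · (h x0)) N)

lemma exists_cinfo_succ_eq_gup [Nonempty W] (hξ : ∀ y : Y, Set.range (ξ y) = {x : X | h x = y})
    (π : ℕ → List Y → List U → U) (x0 : X) (ws : ℕ → W) (t : ℕ) (v : Y)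
    (hv : gup f l ξ (cinfo f h l ξ π x0 ws t) v (cmeas f h π x0 ws t) (cinput f h π x0 ws t) ≠ ⊥) :
    ∃ x0' ws', h x0' = h x0 ∧ cmeas f h π x0' ws' (t + 1) = v ∧
      cinfo f h l ξ π x0' ws' (t + 1)
        = gup f l ξ (cinfo f h l ξ π x0 ws t) v (cmeas f h π x0 ws t) (cinput f h π x0 ws t) := by
  set ys := cmeas f h π x0 ws
  set us := cinput f h π x0 ws
  obtain ⟨i, hi⟩ : ∃ i, gup f l ξ (cinfo f h l ξ π x0 ws t) v (ys t) (us t) i ≠ ⊥ := by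
    by_contra! H
    exact hv (funext H)
  obtain ⟨j, w, hfw, hj⟩ :
      ∃ j w, ξ v i = f (ξ (ys t) j) (us t) w ∧ cinfo f h l ξ π x0 ws t j ≠ ⊥ := by
    obtain ⟨_, ⟨j, w, hfw, rfl⟩, hc⟩ := not_forall₂.1 (mt sSup_eq_bot.2 hi)
    exact ⟨j, w, hfw, fun hb => hc (by rw [hb, EReal.add_bot])⟩
  rw [cinfo, rvec_eq_rho f l ξ hξ] at hj
  obtain ⟨xs, ws', hH, hx⟩ := exists_isHistory_of_rho_ne_bot l hj
  obtain ⟨xs', ws'', hH', hx', -⟩ := hH.exists_succ l (hx ▸ apply_enum_eq hξ _ _) w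
  obtain ⟨hstate, hinput⟩ := hH'.cstate_eq
  have hmeas : ∀ τ ≤ t, cmeas f h π (xs' 0) ws'' τ = ys τ := fun τ hτ => by
    rw [cmeas, hstate τ (hτ.trans t.le_succ), hH'.2 τ (Nat.lt_succ_of_le hτ)]
  have hv' : cmeas f h π (xs' 0) ws'' (t + 1) = v := by
    rw [cmeas, hstate (t + 1) le_rfl, hx', hx, ← hfw, apply_enum_eq hξ]
  refine ⟨xs' 0, ws'', hmeas 0 t.zero_le, hv', ?_⟩
  rw [cinfo, rvec, hv', hmeas t le_rfl, hinput t t.lt_succ_self,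
    rvec_congr f l ξ hmeas fun τ hτ => hinput τ (hτ.trans t.lt_succ_self)]
  rfl

lemma Vseq_cinfo_le [Nonempty W] [Nonempty U]
    (pos : ∀ (x : X) (u : U), (0 : EReal) ≤ ⨆ w : W, (l x u w : EReal))
    (hξ : ∀ y : Y, Set.range (ξ y) = {x : X | h x = y}) (π : ℕ → List Y → List U → U) (k : ℕ) :
    ∀ (x0 : X) (ws : ℕ → W) (t : ℕ),
      Vseq f l ξ k (cinfo f h l ξ π x0 ws t) (cmeas f h π x0 ws t)
        ≤ ⨆ N, Jcost f h l π N (h x0) := by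
  induction k with
  | zero => exact iSup_cinfo_le f h l ξ pos hξ π
  | succ k ih =>
    intro x0 ws t
    refine (iInf_le _ (cinput f h π x0 ws t)).trans (iSup_le fun v => ?_)
    by_cases hv : gup f l ξ (cinfo f h l ξ π x0 ws t) v (cmeas f h π x0 ws t)
        (cinput f h π x0 ws t) = ⊥
    · rw [hv, Vseq_bot]
      exact bot_le
    · obtain ⟨x0', ws', hx0', hv', hr⟩ := exists_cinfo_succ_eq_gup f h l ξ hξ π x0 ws t v hv
      simpa only [hv', hr, hx0'] using ih x0' ws' (t + 1)

lemma Vstar_le_iSup_Jcost [Nonempty W] [Nonempty U]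
    (pos : ∀ (x : X) (u : U), (0 : EReal) ≤ ⨆ w : W, (l x u w : EReal))
    (hξ : ∀ y : Y, Set.range (ξ y) = {x : X | h x = y}) (π : ℕ → List Y → List U → U) (x0 : X) :
    Vstar f l ξ 0 (h x0) ≤ ⨆ N, Jcost f h l π N (h x0) :=
  iSup_le fun k => Vseq_cinfo_le f h l ξ pos hξ π k x0 (fun _ => Classical.arbitrary W) 0

end Optimality

end

theorem info_state_policy_optimal_general {X U W Y : Type*} [Nonempty U]
    [Nonempty W] [Nonempty Y] {M : ℕ} (f : X → U → W → X) (h : X → Y)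
    (hsurj : Function.Surjective h) (l : X → U → W → ℝ) (ξ : Y → Fin M → X)
    (pos : ∀ (x : X) (u : U), (0 : EReal) ≤ ⨆ w : W, (l x u w : EReal))
    (hξ : ∀ y : Y, Set.range (ξ y) = {x : X | h x = y})
    (η : (Fin M → EReal) → Y → U)
    (hη : ∀ (r : Fin M → EReal), (∀ i, r i ≠ ⊤) → ∀ y : Y,
      Bu f l ξ (fun r' y' => ⨆ k : ℕ, Vseq f l ξ k r' y') (η r y) r y
        = ⨆ k : ℕ, Vseq f l ξ k r y) :
    ∀ y0 : Y,
      (⨆ N : ℕ, Jcost f h l (infoStrategy f l ξ η) N y0)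
        = ⨅ π : ℕ → List Y → List U → U, ⨆ N : ℕ, Jcost f h l π N y0 := by
  intro y0
  obtain ⟨x0, rfl⟩ := hsurj y0
  refine le_antisymm (le_iInf fun π => ?_) (iInf_le _ _)
  exact (iSup_Jcost_infoStrategy_le f h l ξ hξ hη _).trans (Vstar_le_iSup_Jcost f h l ξ pos hξ π x0)

/-- Under the positivity and finite-preimage assumptions, suppose the
value-iteration sequence is pointwise bounded, with pointwise limit
`V_⋆(r, y) = sup_k V_k(r, y)`, and suppose `η_⋆` is a minimizing argument of the Bellman
operator applied to `V_⋆`, i.e. `B_{η_⋆(r,y)} V_⋆(r, y) = V_⋆(r, y)`. Then the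
information-state feedback policy `μ_t(y_{0:t}, u_{0:t-1}) = η_⋆(r_t, y_t)` (with
`r_0 = 0`, `r_{t+1} = g(r_t, y_{t+1}, y_t, u_t)`) is optimal:
`sup_N J_{μ}^N(y_0) = J_⋆(y_0) = inf_π sup_N J_π^N(y_0)` for every `y_0`. -/
theorem info_state_policy_optimal {X U W Y : Type*} [Nonempty X] [Nonempty U]
    [Nonempty W] [Nonempty Y] {M : ℕ} (f : X → U → W → X) (h : X → Y)
    (hsurj : Function.Surjective h) (l : X → U → W → ℝ) (ξ : Y → Fin M → X)
    (pos : ∀ (x : X) (u : U), (0 : EReal) ≤ ⨆ w : W, (l x u w : EReal))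
    (hξ : ∀ y : Y, Set.range (ξ y) = {x : X | h x = y})
    (hbdd : ∀ (r : Fin M → EReal), (∀ i, r i ≠ ⊤) → ∀ y : Y,
      (⨆ k : ℕ, Vseq f l ξ k r y) < ⊤)
    (η : (Fin M → EReal) → Y → U)
    (hη : ∀ (r : Fin M → EReal), (∀ i, r i ≠ ⊤) → ∀ y : Y,
      Bu f l ξ (fun r' y' => ⨆ k : ℕ, Vseq f l ξ k r' y') (η r y) r y
        = ⨆ k : ℕ, Vseq f l ξ k r y) :
    ∀ y0 : Y,
      (⨆ N : ℕ, Jcost f h l (infoStrategy f l ξ η) N y0)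
        = ⨅ π : ℕ → List Y → List U → U, ⨆ N : ℕ, Jcost f h l π N y0 :=
  info_state_policy_optimal_general f h hsurj l ξ pos hξ η hη
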